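/- arXiv:2107.01395 — 5 statements merged into one kernel-verified Lean document; each statement's English description precedes it below -/
import Mathlib

section
/- For every integer m ≥ 2, the greatest common divisor of the binomial coefficients C(m+1,1), C(m+1,2), …, C(m+1,m-1) equals p if m+1 is a power of a prime p, and equals 1 otherwise. -/
open Finset

/-- The extra term `C(m+1, m) = C(m+1, 1)` is already a multiple of the smaller gcd. -/
lemma gcd_choose_Icc_pred_eq {m : ℕ} (hm : 2 ≤ m) :
    (Icc 1 (m - 1)).gcd (m + 1).choose = (Icc 1 m).gcd (m + 1).choose := by
  obtain ⟨k, rfl⟩ : ∃ k, m = k + 1 := ⟨m - 1, by omega⟩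
  have hdvd : (Icc 1 k).gcd (k + 2).choose ∣ (k + 2).choose (k + 1) := by
    refine (Finset.gcd_dvd (f := (k + 2).choose) (mem_Icc.2 ⟨le_rfl, by omega⟩)).trans ?_
    rw [Nat.choose_one_right, Nat.choose_succ_self_right]
  rw [Nat.add_sub_cancel, ← insert_Icc_right_eq_Icc_add_one (by omega), Finset.gcd_insert]
  exact (Nat.gcd_eq_right hdvd).symm

/-- For every integer `m ≥ 2`, the gcd of the binomial coefficients
`C(m+1,1), …, C(m+1,m-1)` equals `p` if `m+1` is a power of a prime `p`,
and equals `1` otherwise. -/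
theorem stmt_0 (m : ℕ) (hm : 2 ≤ m) :
    (∀ p s : ℕ, p.Prime → 0 < s → m + 1 = p ^ s →
      (Finset.Icc 1 (m - 1)).gcd (fun i => (m + 1).choose i) = p) ∧
    ((¬ ∃ p s : ℕ, p.Prime ∧ 0 < s ∧ m + 1 = p ^ s) →
      (Finset.Icc 1 (m - 1)).gcd (fun i => (m + 1).choose i) = 1) := by
  have hgcd := gcd_choose_Icc_pred_eq hm
  refine ⟨fun p s hp hs hpow => ?_, fun hnot => ?_⟩
  · have hpp : IsPrimePow (m + 1) := (isPrimePow_nat_iff _).2 ⟨p, s, hp, hs, hpow.symm⟩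
    have := Choose.gcd_choose_eq_minFac_of_isPrimePow hpp
    rw [Nat.add_sub_cancel, hpow, hp.pow_minFac hs.ne', ← hpow] at this
    exact hgcd.trans this
  · have hpp : ¬ IsPrimePow (m + 1) := fun h =>
      let ⟨p, s, hp, hs, hpow⟩ := (isPrimePow_nat_iff _).1 h
      hnot ⟨p, s, hp, hs, hpow.symm⟩
    have := Choose.gcd_choose_eq_one_of_not_isPrimePow (by omega) hpp
    rw [Nat.add_sub_cancel] at this
    exact hgcd.trans this
end

section
/- If m+1 is not a prime power (i.e., m+1 has at least two distinct prime factors), then the greatest common divisor of C(m+1,1), …, C(m+1,m) equals 1. -/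
/-!
For every prime `r`, write `n = r ^ a * s` with `r ∤ s`. Lucas' theorem gives
`C(r ^ a * s, r ^ a) ≡ C(s, 1) = s (mod r)`, so `r` does not divide `C(n, r ^ a)`. When `n` has a
prime factor other than `r`, we have `s ≥ 2`, so `r ^ a` lies strictly between `0` and `n`; hence
no prime divides all of `C(n, 1), …, C(n, n - 1)`.
-/

namespace Nat

theorem choose_prime_mul_modEq {p : ℕ} (hp : p.Prime) (n k : ℕ) :
    (p * n).choose (p * k) ≡ n.choose k [MOD p] := by
  have := @Choose.choose_modEq_choose_mod_mul_choose_div_nat (p * n) (p * k) p ⟨hp⟩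
  rwa [mul_mod_right, mul_mod_right, choose_self, one_mul, Nat.mul_div_cancel_left _ hp.pos,
    Nat.mul_div_cancel_left _ hp.pos] at this

theorem Prime.not_dvd_choose_pow_mul {p s : ℕ} (hp : p.Prime) (hs : ¬ p ∣ s) (a : ℕ) :
    ¬ p ∣ (p ^ a * s).choose (p ^ a) := by
  induction a with
  | zero => simpa using hs
  | succ a ih =>
    rw [pow_succ', mul_assoc, ← modEq_zero_iff_dvd]
    exact fun h => ih ((modEq_zero_iff_dvd).mp ((choose_prime_mul_modEq hp _ _).symm.trans h))

theorem Prime.not_dvd_choose_ordProj {p n : ℕ} (hp : p.Prime) (hn : n ≠ 0) :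
    ¬ p ∣ n.choose (ordProj[p] n) := by
  have h := hp.not_dvd_choose_pow_mul (not_dvd_ordCompl hp hn) (n.factorization p)
  rwa [ordProj_mul_ordCompl_eq_self] at h

theorem ordProj_lt_of_prime_dvd {n p q : ℕ} (hp : p.Prime) (hq : q.Prime) (hqp : q ≠ p)
    (hqn : q ∣ n) (hn : n ≠ 0) : ordProj[p] n < n := by
  refine (ordProj_le p hn).lt_of_ne fun h => hqp ?_
  rw [← h] at hqn
  exact (prime_dvd_prime_iff_eq hq hp).mp (hq.dvd_of_dvd_pow hqn)

theorem gcd_choose_eq_one_of_two_prime_dvd {n p q : ℕ} (hp : p.Prime) (hq : q.Prime)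
    (hpq : p ≠ q) (hpn : p ∣ n) (hqn : q ∣ n) (hn : n ≠ 0) :
    (Finset.Icc 1 (n - 1)).gcd n.choose = 1 := by
  refine eq_one_iff_not_exists_prime_dvd.mpr fun r hr hdvd => hr.not_dvd_choose_ordProj hn ?_
  have hlt : ordProj[r] n < n := by
    rcases eq_or_ne p r with rfl | hpr
    · exact ordProj_lt_of_prime_dvd hp hq hpq.symm hqn hn
    · exact ordProj_lt_of_prime_dvd hr hp hpr hpn hn
  have hmem : ordProj[r] n ∈ Finset.Icc 1 (n - 1) :=
    Finset.mem_Icc.mpr ⟨ordProj_pos n r, by omega⟩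
  exact hdvd.trans (Finset.gcd_dvd hmem)

end Nat

theorem stmt_2_general (m : ℕ)
    (h : ∃ p q : ℕ, p.Prime ∧ q.Prime ∧ p ≠ q ∧ p ∣ (m + 1) ∧ q ∣ (m + 1)) :
    (Finset.Icc 1 m).gcd (fun i => (m + 1).choose i) = 1 := by
  obtain ⟨p, q, hp, hq, hpq, hpn, hqn⟩ := h
  simpa using Nat.gcd_choose_eq_one_of_two_prime_dvd hp hq hpq hpn hqn m.succ_ne_zero

/-- If `m + 1` has at least two distinct prime factors, then the gcd of
`C(m+1,1), …, C(m+1,m)` equals `1`. -/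
theorem stmt_2 (m : ℕ) (hm : 2 ≤ m)
    (h : ∃ p q : ℕ, p.Prime ∧ q.Prime ∧ p ≠ q ∧ p ∣ (m + 1) ∧ q ∣ (m + 1)) :
    (Finset.Icc 1 m).gcd (fun i => (m + 1).choose i) = 1 :=
  stmt_2_general m h
end

section
/- For every integer m ≥ 4, gcd{C(m+1,i) : 2 ≤ i ≤ m-2} = d(m)·d(m-1), where d(k) = gcd{C(k+1,i) : 1 ≤ i ≤ k-1}. -/
/-!
Write `n = m + 1`, `D = d(m) ∣ n` and `E = d(m-1) ∣ m`. These are coprime, and Pascal's rule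
`C(n, i) = C(m, i-1) + C(m, i)` shows `D * E ∣ d₂(m)`.

Conversely, let `p` be a prime dividing `d₂(m)`. From `p ∣ C(n, 2)` we get `p ∣ n - r` with
`r ∈ {0, 1}`. If `n - r = p^c * w` with `p ∤ w` and `w ≠ 1`, Lucas' theorem gives
`C(n, p^c) ≡ w [MOD p]`, a contradiction; so `n = p^a + r`, and then `p` divides `D` or `E`.
Moreover `C(p^a, k)` has `p`-adic valuation `a - v_p(k)`, so some `C(n, k)` in the range is not
divisible by `p²` (for `n = p^a + 1` because `p` is coprime to `n`). Hence `d₂(m)` is squarefree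
and all its prime factors divide `D * E`.
-/

open Finset

namespace Nat

variable {p : ℕ}

theorem choose_prime_pow_modEq (hp : p.Prime) (n t : ℕ) :
    n.choose (p ^ t) ≡ n / p ^ t [MOD p] := by
  have := Fact.mk hp
  induction t generalizing n with
  | zero => simp [ModEq.refl]
  | succ t ih =>
    have hmod : p ^ (t + 1) % p = 0 := Nat.mod_eq_zero_of_dvd (dvd_pow_self p t.succ_ne_zero)
    have hdiv : p ^ (t + 1) / p = p ^ t := by rw [pow_succ, Nat.mul_div_cancel _ hp.pos]
    calc n.choose (p ^ (t + 1))
        ≡ (n % p).choose (p ^ (t + 1) % p) * (n / p).choose (p ^ (t + 1) / p) [MOD p] :=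
          Choose.choose_modEq_choose_mod_mul_choose_div_nat
      _ = (n / p).choose (p ^ t) := by rw [hmod, hdiv, choose_zero_right, one_mul]
      _ ≡ n / p / p ^ t [MOD p] := ih (n / p)
      _ = n / p ^ (t + 1) := by rw [Nat.div_div_eq_div_mul, pow_succ']

theorem not_dvd_choose_prime_pow (hp : p.Prime) {c w r : ℕ} (hw : ¬ p ∣ w) (hr : r < p ^ c) :
    ¬ p ∣ (p ^ c * w + r).choose (p ^ c) := by
  have hdiv : (p ^ c * w + r) / p ^ c = w := by
    rw [Nat.mul_add_div (pow_pos hp.pos c), Nat.div_eq_of_lt hr, add_zero]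
  rwa [(choose_prime_pow_modEq hp _ c).dvd_iff dvd_rfl, hdiv]

theorem eq_prime_pow_add_of_dvd_choose (hp : p.Prime) {n r : ℕ} (hn : 5 ≤ n) (hr : r ≤ 1)
    (hpn : p ∣ n - r) (h : ∀ i ∈ Icc 2 (n - 3), p ∣ n.choose i) : ∃ a, n = p ^ a + r := by
  obtain ⟨c, w, hpw, hw⟩ := exists_eq_pow_mul_and_not_dvd (n := n - r) (by omega) p hp.ne_one
  have hc : c ≠ 0 := by
    rintro rfl
    rw [hw, pow_zero, one_mul] at hpn
    exact hpw hpn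
  refine ⟨c, ?_⟩
  by_contra hne
  have hw2 : 2 ≤ w := by rcases w with _ | _ | w <;> omega
  have hpc : 2 ≤ p ^ c := hp.two_le.trans (Nat.le_self_pow hc p)
  have hn' : n = p ^ c * w + r := by omega
  have hbound : p ^ c + 3 ≤ n := by
    rcases hw2.eq_or_lt with rfl | hw3 <;> nlinarith
  apply not_dvd_choose_prime_pow hp hpw (hr.trans_lt hpc)
  rw [← hn']
  exact h _ (mem_Icc.2 ⟨hpc, by omega⟩)

theorem exists_eq_prime_pow_of_dvd_choose (hp : p.Prime) {n : ℕ} (hn : 5 ≤ n)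
    (h : ∀ i ∈ Icc 2 (n - 3), p ∣ n.choose i) : ∃ a, n = p ^ a ∨ n = p ^ a + 1 := by
  have hchoose : n * (n - 1) = n.choose 2 * 2 := by
    simpa [Nat.sub_add_cancel (by omega : 1 ≤ n)] using add_one_mul_choose_eq (n - 1) 1
  have hdvd : p ∣ n * (n - 1) :=
    hchoose ▸ dvd_mul_of_dvd_left (h 2 (mem_Icc.2 ⟨le_rfl, by omega⟩)) 2
  rcases hp.dvd_mul.1 hdvd with hpn | hpn
  · obtain ⟨a, ha⟩ := eq_prime_pow_add_of_dvd_choose (r := 0) hp hn zero_le_one hpn h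
    exact ⟨a, .inl ha⟩
  · obtain ⟨a, ha⟩ := eq_prime_pow_add_of_dvd_choose hp hn le_rfl hpn h
    exact ⟨a, .inr ha⟩

theorem exists_not_sq_dvd_choose_prime_pow (hp : p.Prime) {n a : ℕ} (hn : 5 ≤ n)
    (ha : p ^ a ≤ n) (ha' : n ≤ p ^ a + 1) :
    ∃ k ∈ Icc 2 (n - 3), ¬ p ^ 2 ∣ (p ^ a).choose k := by
  obtain ⟨k, hk2, hkn, hka, hfac⟩ :
      ∃ k, 2 ≤ k ∧ k + 3 ≤ n ∧ k ≤ p ^ a ∧ a ≤ k.factorization p + 1 := by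
    match a with
    | 0 => rw [pow_zero] at ha'; omega
    | 1 =>
      rw [pow_one] at ha' ⊢
      exact ⟨2, le_rfl, by omega, by omega, by omega⟩
    | b + 2 =>
      have hx : 2 ≤ p ^ (b + 1) := hp.two_le.trans (Nat.le_self_pow b.succ_ne_zero p)
      refine ⟨p ^ (b + 1), hx, ?_,
        pow_le_pow_right₀ hp.one_lt.le (by omega), by simp [hp.factorization_self]⟩
      rw [pow_succ'] at ha
      rcases hp.two_le.eq_or_lt with rfl | hp3
      · omega
      · nlinarith
  refine ⟨k, mem_Icc.2 ⟨hk2, by omega⟩, ?_⟩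
  rw [hp.pow_dvd_iff_le_factorization (choose_ne_zero hka),
    factorization_choose_prime_pow hp hka (by omega)]
  omega

theorem dvd_choose_of_dvd_choose_succ {d n k : ℕ} (hd : d.Coprime (n + 1))
    (h : d ∣ (n + 1).choose k) : d ∣ n.choose k :=
  hd.dvd_of_dvd_mul_right (choose_mul_succ_eq n k ▸ dvd_mul_of_dvd_left h _)

theorem exists_not_sq_dvd_choose (hp : p.Prime) {n a : ℕ} (hn : 5 ≤ n)
    (ha : n = p ^ a ∨ n = p ^ a + 1) : ∃ i ∈ Icc 2 (n - 3), ¬ p ^ 2 ∣ n.choose i := by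
  obtain ⟨k, hk, hsq⟩ := exists_not_sq_dvd_choose_prime_pow (a := a) hp hn (by omega) (by omega)
  refine ⟨k, hk, ?_⟩
  rcases ha with rfl | rfl
  · exact hsq
  · have ha0 : a ≠ 0 := by rintro rfl; simp at hn
    have hcop : (p ^ 2).Coprime (p ^ a + 1) := by
      refine Coprime.pow_left 2 ((hp.coprime_iff_not_dvd).2 fun h => hp.one_lt.ne' ?_)
      exact Nat.dvd_one.1 ((Nat.dvd_add_right (dvd_pow_self p ha0)).1 h)
    exact mt (dvd_choose_of_dvd_choose_succ hcop) hsq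

theorem squarefree_gcd_choose (n : ℕ) (hn : 5 ≤ n) :
    Squarefree ((Icc 2 (n - 3)).gcd n.choose) := by
  refine squarefree_iff_prime_squarefree.2 fun p hp hsq => ?_
  have hdvd : ∀ i ∈ Icc 2 (n - 3), p ^ 2 ∣ n.choose i := fun i hi =>
    (sq p ▸ hsq).trans (Finset.gcd_dvd hi)
  obtain ⟨a, ha⟩ := exists_eq_prime_pow_of_dvd_choose hp hn
    fun i hi => (dvd_pow_self p two_ne_zero).trans (hdvd i hi)
  obtain ⟨i, hi, hndvd⟩ := exists_not_sq_dvd_choose hp hn ha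
  exact hndvd (hdvd i hi)

theorem gcd_choose_Icc_one_dvd (n k : ℕ) (hk : 1 ≤ k) : (Icc 1 k).gcd n.choose ∣ n := by
  simpa using Finset.gcd_dvd (f := n.choose) (b := 1) (mem_Icc.2 ⟨le_rfl, hk⟩)

theorem prime_dvd_gcd_choose_prime_pow (hp : p.Prime) {a k : ℕ} (hk : k < p ^ a) :
    p ∣ (Icc 1 k).gcd (p ^ a).choose :=
  Finset.dvd_gcd fun i hi => by
    rw [mem_Icc] at hi
    exact hp.dvd_choose_pow (by omega) (by omega)

theorem gcd_choose_mul_gcd_choose_dvd (m : ℕ) (hm : 3 ≤ m) :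
    (Icc 1 (m - 1)).gcd (m + 1).choose * (Icc 1 (m - 2)).gcd m.choose ∣
      (Icc 2 (m - 2)).gcd (m + 1).choose := by
  have hcop : (m + 1).Coprime m := by simp
  have hDE := (hcop.coprime_dvd_left (gcd_choose_Icc_one_dvd (m + 1) (m - 1) (by omega))
    |>.coprime_dvd_right (gcd_choose_Icc_one_dvd m (m - 2) (by omega)))
  refine Finset.dvd_gcd fun i hi => ?_
  obtain ⟨hi2, him⟩ := mem_Icc.1 hi
  obtain ⟨j, rfl⟩ : ∃ j, i = j + 1 := ⟨i - 1, by omega⟩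
  refine hDE.mul_dvd_of_dvd_of_dvd (Finset.gcd_dvd (mem_Icc.2 ⟨by omega, by omega⟩)) ?_
  rw [choose_succ_succ']
  exact dvd_add (Finset.gcd_dvd (mem_Icc.2 ⟨by omega, by omega⟩))
    (Finset.gcd_dvd (mem_Icc.2 ⟨by omega, by omega⟩))

end Nat

open Nat

/-- For every `m ≥ 4`, `gcd{C(m+1,i) : 2 ≤ i ≤ m-2} = d(m)·d(m-1)`, where
`d(k) = gcd{C(k+1,i) : 1 ≤ i ≤ k-1}`. -/
theorem stmt_3 (m : ℕ) (hm : 4 ≤ m) :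
    (Finset.Icc 2 (m - 2)).gcd (fun i => (m + 1).choose i) =
      ((Finset.Icc 1 (m - 1)).gcd (fun i => (m + 1).choose i)) *
        ((Finset.Icc 1 (m - 2)).gcd (fun i => m.choose i)) := by
  refine Nat.dvd_antisymm ?_ (gcd_choose_mul_gcd_choose_dvd m (by omega))
  have hsq : Squarefree ((Icc 2 (m - 2)).gcd (m + 1).choose) := by
    simpa using squarefree_gcd_choose (m + 1) (by omega)
  have hne : (Icc 1 (m - 1)).gcd (m + 1).choose * (Icc 1 (m - 2)).gcd m.choose ≠ 0 :=
    mul_ne_zero (ne_zero_of_dvd_ne_zero m.succ_ne_zero (gcd_choose_Icc_one_dvd _ _ (by omega)))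
      (ne_zero_of_dvd_ne_zero (by omega) (gcd_choose_Icc_one_dvd _ _ (by omega)))
  rw [← prod_primeFactors_of_squarefree hsq, prod_primeFactors_dvd_iff hne]
  intro p hp
  obtain ⟨hp, hpD, -⟩ := mem_primeFactors.1 hp
  refine (mem_primeFactors_of_ne_zero hne).2 ⟨hp, ?_⟩
  obtain ⟨a, ha | ha⟩ := exists_eq_prime_pow_of_dvd_choose hp (n := m + 1) (by omega)
    fun i hi => hpD.trans (Finset.gcd_dvd (by simpa using hi))
  · exact dvd_mul_of_dvd_left (ha ▸ prime_dvd_gcd_choose_prime_pow hp (by omega)) _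
  · exact dvd_mul_of_dvd_right ((show m = p ^ a by omega) ▸
      prime_dvd_gcd_choose_prime_pow hp (by omega)) _
end

section
/- Let m ≥ 5 and define D(m) = gcd{C(m+1,i) − C(m+1,i−1) : 3 ≤ i ≤ m−1}. Then D(m)/d(m) = d(m−1) if m is not of the form 2^k − 2, and D(m)/d(m) = 2 if m = 2^k − 2 for some k ≥ 3; in particular d(m) divides D(m). -/
/-!
Write `n = m + 1` and `c = C(n, 2)`. Modulo `D(m)` all `C(n, i)` with `2 ≤ i ≤ n - 2` are
congruent to `c`, and feeding this into `(i + 1) C(n, i + 1) = (n - i) C(n, i)` for `i = 2, 3`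
gives `D(m) ∣ 2c` and `D(m) ∣ (m - 4) c`.

If `D(m) ∣ c`, then `D(m)` divides every `C(n, i)` with `2 ≤ i ≤ n - 2` and also `n m = 2c`.
Splitting `D(m)` into a divisor of `n` and a divisor of `m` and going down Pascal's triangle
gives `D(m) ∣ d(m) d(m-1)`; the reverse divisibility is immediate since `d(m) ∣ n` and
`d(m-1) ∣ m` are coprime.

Otherwise `m` is even, and comparing `C(n, 4)` with `c` shows `4 ∤ D(m)`, so `D(m) = 2E` with
`E` and `c` odd. Then every `C(n, i)` is odd, which happens exactly when `n + 1` is a power of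
two; and `E ∣ d(m)`, because the alternating sum of a row gives `d(m-1) ∣ 2` for even `m`.
-/

open Finset

lemma cast_choose_succ_right_eq {n k : ℕ} (hk : k ≤ n) :
    (n.choose (k + 1) : ℤ) * (k + 1) = n.choose k * ((n : ℤ) - k) := by
  have := Nat.choose_succ_right_eq n k
  zify [hk] at this
  exact this

lemma forall_odd_choose_iff (n : ℕ) : (∀ i ≤ n, Odd (n.choose i)) ↔ ∃ j, n + 1 = 2 ^ j := by
  have hpascal : (∀ i ≤ n, Odd (n.choose i)) ↔ ∀ i ∈ Icc 1 n, 2 ∣ (n + 1).choose i := by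
    constructor
    · intro h i hi
      obtain ⟨k, rfl⟩ : ∃ k, i = k + 1 := ⟨i - 1, by grind⟩
      rw [Nat.choose_succ_succ']
      exact (Odd.add_odd (h k (by grind)) (h (k + 1) (by grind))).two_dvd
    · intro h i hi
      induction i with
      | zero => simp
      | succ i ih =>
        have h2 := h (i + 1) (by grind)
        rw [Nat.choose_succ_succ'] at h2
        have := ih (by omega)
        rw [Nat.odd_iff] at this ⊢
        omega
  rw [hpascal]
  have := Fact.mk Nat.prime_two
  constructor
  · intro h
    exact ⟨_, Choose.eq_pow_multiplicity_of_choose_modEq_zero_nat n.succ_pos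
      fun i hi => Nat.modEq_zero_iff_dvd.2 (h i (by simpa using hi))⟩
  · rintro ⟨j, hj⟩ i hi
    rw [hj]
    exact Nat.prime_two.dvd_choose_pow (by grind) (by grind)

/-- `chooseGcd (k + 1)` is the `d(k)` of the statement (see `gcd_Icc_choose_succ`). -/
def chooseGcd (n : ℕ) : ℕ := (Icc 1 (n - 1)).gcd n.choose

lemma dvd_chooseGcd_iff {q : ℤ} {n : ℕ} :
    q ∣ (chooseGcd n : ℤ) ↔ ∀ i ∈ Icc 1 (n - 1), q ∣ (n.choose i : ℤ) := by
  simp only [Int.dvd_natCast, chooseGcd, Finset.dvd_gcd_iff]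

lemma gcd_Icc_choose_succ {k : ℕ} (hk : 2 ≤ k) :
    (Icc 1 (k - 1)).gcd (fun i => (k + 1).choose i) = chooseGcd (k + 1) := by
  apply Nat.dvd_antisymm
  · refine Finset.dvd_gcd_iff.2 fun i hi => ?_
    obtain hik | hik : i = k ∨ i ≤ k - 1 := by grind
    · rw [hik, Nat.choose_succ_self_right]
      simpa using Finset.gcd_dvd (s := Icc 1 (k - 1)) (f := fun i => (k + 1).choose i)
        (mem_Icc.2 ⟨le_rfl, by omega⟩)
    · exact Finset.gcd_dvd (by grind)
  · exact Finset.dvd_gcd_iff.2 fun i hi => Finset.gcd_dvd (by grind)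

lemma chooseGcd_dvd_self {n : ℕ} (hn : 2 ≤ n) : chooseGcd n ∣ n := by
  simpa [chooseGcd] using
    Finset.gcd_dvd (f := n.choose) (mem_Icc.2 ⟨le_rfl, by omega⟩ : 1 ∈ Icc 1 (n - 1))

lemma isCoprime_chooseGcd_succ {m : ℕ} (hm : 2 ≤ m) :
    IsCoprime (chooseGcd (m + 1) : ℤ) (chooseGcd m) :=
  Nat.isCoprime_iff_coprime.2 <|
    ((Nat.coprime_self_add_left.2 (Nat.coprime_one_left m)).coprime_dvd_left
      (chooseGcd_dvd_self (by omega))).coprime_dvd_right (chooseGcd_dvd_self hm)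

lemma chooseGcd_dvd_two_of_even {n : ℕ} (hn : Even n) (hn0 : n ≠ 0) :
    (chooseGcd n : ℤ) ∣ 2 := by
  obtain ⟨k, rfl⟩ : ∃ k, n = k + 1 := ⟨n - 1, by omega⟩
  have hsum := Int.alternating_sum_range_choose_of_ne hn0
  rw [Finset.sum_range_succ, Finset.sum_range_succ', hn.neg_one_pow] at hsum
  have : (2 : ℤ) = -∑ i ∈ range k, (-1) ^ (i + 1) * ((k + 1).choose (i + 1) : ℤ) := by
    simp at hsum
    linarith
  rw [this]
  refine (Finset.dvd_sum fun i hi => ?_).neg_right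
  exact (dvd_chooseGcd_iff.1 dvd_rfl _ (by simp at hi ⊢; omega)).mul_left _

lemma dvd_chooseGcd_of_dvd_choose_succ {b : ℤ} {m : ℕ} (hb : b ∣ m)
    (h : ∀ i ∈ Icc 2 (m - 1), b ∣ ((m + 1).choose i : ℤ)) : b ∣ (chooseGcd m : ℤ) := by
  refine dvd_chooseGcd_iff.2 fun i hi => ?_
  obtain ⟨hi1, hi2⟩ := mem_Icc.1 hi
  clear hi
  induction i, hi1 using Nat.le_induction with
  | base => simpa using hb
  | succ i hi1 ih =>
    have := h (i + 1) (by grind)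
    rw [Nat.choose_succ_succ', Nat.cast_add] at this
    simpa using dvd_sub this (ih (by omega))

lemma exists_two_pow_of_odd_choose {m : ℕ} (he : Even m)
    (h : ∀ i ∈ Icc 2 (m - 1), Odd ((m + 1).choose i)) : ∃ j, m + 2 = 2 ^ j := by
  refine (forall_odd_choose_iff (m + 1)).1 fun i hi => ?_
  rcases Nat.lt_or_ge i 2 with hi2 | hi2
  · interval_cases i <;> simp [he.add_one]
  rcases Nat.lt_or_ge i m with him | him
  · exact h i (by grind)
  obtain rfl | rfl : i = m ∨ i = m + 1 := by omega
  · simp [he.add_one]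
  · simp

/-- The `D(m)` of the statement. -/
def chooseDiffGcd (m : ℕ) : ℤ :=
  (Icc 3 (m - 1)).gcd (fun i => ((m + 1).choose i : ℤ) - ((m + 1).choose (i - 1) : ℤ))

section chooseDiffGcd

variable {m : ℕ} {q : ℤ}

lemma dvd_chooseDiffGcd_iff : q ∣ chooseDiffGcd m ↔
    ∀ i ∈ Icc 3 (m - 1), q ∣ ((m + 1).choose i : ℤ) - (m + 1).choose (i - 1) :=
  Finset.dvd_gcd_iff

lemma chooseDiffGcd_nonneg (m : ℕ) : 0 ≤ chooseDiffGcd m :=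
  Int.nonneg_of_normalize_eq_self Finset.normalize_gcd

lemma chooseGcd_succ_dvd_chooseDiffGcd (m : ℕ) : (chooseGcd (m + 1) : ℤ) ∣ chooseDiffGcd m :=
  dvd_chooseDiffGcd_iff.2 fun i hi =>
    dvd_sub (dvd_chooseGcd_iff.1 dvd_rfl i (by grind))
      (dvd_chooseGcd_iff.1 dvd_rfl (i - 1) (by grind))

lemma chooseGcd_dvd_chooseDiffGcd (m : ℕ) : (chooseGcd m : ℤ) ∣ chooseDiffGcd m :=
  dvd_chooseDiffGcd_iff.2 fun i hi => by
    obtain ⟨j, rfl⟩ : ∃ j, i = j + 2 := ⟨i - 2, by grind⟩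
    rw [show j + 2 - 1 = j + 1 by omega, Nat.choose_succ_succ', Nat.choose_succ_succ' m j]
    have h := dvd_sub (dvd_chooseGcd_iff.1 (dvd_refl (chooseGcd m : ℤ)) (j + 2) (by grind))
      (dvd_chooseGcd_iff.1 (dvd_refl (chooseGcd m : ℤ)) j (by grind))
    exact h.trans (dvd_of_eq (by push_cast; ring))

lemma two_dvd_chooseDiffGcd (h : ∀ i ≤ m + 1, Odd ((m + 1).choose i)) : 2 ∣ chooseDiffGcd m :=
  dvd_chooseDiffGcd_iff.2 fun i hi =>
    ((h i (by grind)).natCast.sub_odd (h (i - 1) (by grind)).natCast).two_dvd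

lemma dvd_choose_sub_choose_two (hq : q ∣ chooseDiffGcd m) {i : ℕ} (h2 : 2 ≤ i)
    (hi : i ≤ m - 1) : q ∣ ((m + 1).choose i : ℤ) - (m + 1).choose 2 := by
  induction i, h2 using Nat.le_induction with
  | base => simp
  | succ i h2 ih =>
    have := dvd_chooseDiffGcd_iff.1 hq (i + 1) (by grind)
    rw [Nat.add_sub_cancel] at this
    simpa using dvd_add this (ih (by omega))

lemma dvd_two_mul_choose_two (hm : 5 ≤ m) (hq : q ∣ chooseDiffGcd m) :
    q ∣ 2 * (m + 1).choose 2 := by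
  have h3 := dvd_chooseDiffGcd_iff.1 hq 3 (by grind)
  have h4 := dvd_chooseDiffGcd_iff.1 hq 4 (by grind)
  have e3 := cast_choose_succ_right_eq (n := m + 1) (k := 2) (by omega)
  have e4 := cast_choose_succ_right_eq (n := m + 1) (k := 3) (by omega)
  push_cast at h3 h4 e3 e4
  have := dvd_add (dvd_sub (h3.mul_left 3) (h4.mul_left 4)) (h3.mul_left ((m : ℤ) - 6))
  rwa [show 3 * ((m + 1).choose 3 - (m + 1).choose 2 : ℤ)
      - 4 * ((m + 1).choose 4 - (m + 1).choose 3)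
      + (m - 6) * ((m + 1).choose 3 - (m + 1).choose 2) = 2 * (m + 1).choose 2 by
    linear_combination e3 - e4] at this

lemma dvd_choose_two_of_odd (hm : 5 ≤ m) (ho : Odd m) (hq : q ∣ chooseDiffGcd m) :
    q ∣ (m + 1).choose 2 := by
  have h3 := dvd_chooseDiffGcd_iff.1 hq 3 (by grind)
  have e3 := cast_choose_succ_right_eq (n := m + 1) (k := 2) (by omega)
  push_cast at h3 e3
  have h5 : q ∣ ((m : ℤ) - 4) * (m + 1).choose 2 :=
    (h3.mul_left 3).trans (dvd_of_eq (by linear_combination e3))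
  obtain ⟨k, rfl⟩ := ho
  exact (dvd_sub h5 ((dvd_two_mul_choose_two hm hq).mul_left ((k : ℤ) - 2))).trans
    (dvd_of_eq (by push_cast; ring))

lemma dvd_choose_two_of_four_dvd (he : Even m) (hm : 5 ≤ m) (hq : q ∣ chooseDiffGcd m)
    (h4 : 4 ∣ q) : q ∣ (m + 1).choose 2 := by
  obtain ⟨t, ht⟩ := dvd_two_mul_choose_two hm hq
  obtain ⟨u, hu⟩ := dvd_choose_sub_choose_two hq (i := 4) (by norm_num) (by omega)
  obtain ⟨r, rfl⟩ := h4
  have e1 := cast_choose_succ_right_eq (n := m + 1) (k := 1) (by omega)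
  have e3 := cast_choose_succ_right_eq (n := m + 1) (k := 2) (by omega)
  have e4 := cast_choose_succ_right_eq (n := m + 1) (k := 3) (by omega)
  simp only [Nat.choose_one_right] at e1
  push_cast at e1 e3 e4
  obtain ⟨w, hw⟩ := he
  have hmw : (m : ℤ) = 2 * w := by rw [hw]; push_cast; ring
  have hw2 : Even (w : ℤ) := by
    have hmul : Even ((w : ℤ) * (2 * w + 1)) := ⟨r * t, by rw [hmw] at e1; linarith⟩
    rcases Int.even_mul.1 hmul with h | ⟨k, hk⟩
    · exact h
    · omega
  obtain ⟨v, hv⟩ := hw2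
  have hm4 : (m : ℤ) = 4 * v := by rw [hmw, hv]; ring
  rw [hm4] at e1 e3 e4
  rcases eq_or_ne r 0 with rfl | hr
  · exact ⟨0, by linarith⟩
  -- `12 (C(m+1, 4) - C(m+1, 2)) = C(m+1, 2) (m - 5) (m + 2)`, and `m + 2 = 2 (2v + 1)`.
  have hcancel : 4 * r * (12 * u) = 4 * r * (t * (4 * v - 5) * (2 * v + 1)) := by
    linear_combination -12 * hu + (4 * v - 5) * (2 * v + 1) * ht + 3 * e4 + (4 * v - 2) * e3
  have ht2 : Even (t * ((4 * v - 5) * (2 * v + 1))) :=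
    ⟨6 * u, by linarith [mul_left_cancel₀ (by omega : 4 * r ≠ 0) hcancel]⟩
  rcases Int.even_mul.1 ht2 with ⟨s, rfl⟩ | h
  · exact ⟨s, by linarith⟩
  · rcases Int.even_mul.1 h with ⟨k, hk⟩ | ⟨k, hk⟩ <;> omega

lemma dvd_chooseGcd_mul_of_dvd_choose_two (hq : q ∣ chooseDiffGcd m)
    (h2 : q ∣ (m + 1).choose 2) : q ∣ chooseGcd (m + 1) * chooseGcd m := by
  have hmid : ∀ i ∈ Icc 2 (m - 1), q ∣ ((m + 1).choose i : ℤ) := fun i hi => by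
    simpa using dvd_add (dvd_choose_sub_choose_two hq (mem_Icc.1 hi).1 (mem_Icc.1 hi).2) h2
  have e1 := cast_choose_succ_right_eq (n := m + 1) (k := 1) (by omega)
  simp only [Nat.choose_one_right] at e1
  push_cast at e1
  obtain ⟨a, b, ha, hb, rfl⟩ :=
    exists_dvd_and_dvd_of_dvd_mul ((h2.mul_right 2).trans (dvd_of_eq e1) :)
  refine mul_dvd_mul (dvd_chooseGcd_iff.2 fun i hi => ?_)
    (dvd_chooseGcd_of_dvd_choose_succ (by simpa using hb) fun i hi =>
      (dvd_mul_left b a).trans (hmid i hi))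
  rcases (by grind : i = 1 ∨ i = m ∨ i ∈ Icc 2 (m - 1)) with rfl | rfl | hi
  · simpa using ha
  · simpa using ha
  · exact (dvd_mul_right a b).trans (hmid i hi)

lemma exists_two_pow_and_dvd_of_not_dvd_choose_two (he : Even m) (hm : 5 ≤ m)
    (h : ¬ chooseDiffGcd m ∣ (m + 1).choose 2) :
    (∃ j, m + 2 = 2 ^ j) ∧ chooseDiffGcd m ∣ 2 * chooseGcd (m + 1) := by
  set D := chooseDiffGcd m
  have h2C := dvd_two_mul_choose_two hm (dvd_refl D)
  have hD2 : 2 ∣ D := by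
    by_contra h2
    exact h ((Int.prime_two.coprime_iff_not_dvd.2 h2).symm.dvd_of_dvd_mul_left h2C)
  obtain ⟨E, hE⟩ := id hD2
  have hEodd : ¬ 2 ∣ E := fun ⟨r, hr⟩ =>
    h (dvd_choose_two_of_four_dvd he hm dvd_rfl ⟨r, by rw [hE, hr]; ring⟩)
  obtain ⟨t, ht⟩ : E ∣ (m + 1).choose 2 := by
    rw [hE] at h2C
    exact (mul_dvd_mul_iff_left two_ne_zero).1 h2C
  have hC2 : ¬ 2 ∣ ((m + 1).choose 2 : ℤ) := by
    rw [ht]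
    intro h2
    rcases Int.prime_two.dvd_mul.1 h2 with h2 | ⟨s, rfl⟩
    · exact hEodd h2
    · exact h ⟨s, by rw [ht, hE]; ring⟩
  refine ⟨exists_two_pow_of_odd_choose he fun i hi => ?_, ?_⟩
  · have := hD2.trans
      (dvd_choose_sub_choose_two (dvd_refl D) (mem_Icc.1 hi).1 (mem_Icc.1 hi).2)
    refine (Int.odd_coe_nat _).1 (Int.not_even_iff_odd.1 fun h' => hC2 ?_)
    simpa using dvd_sub (even_iff_two_dvd.1 h') this
  · have hEdvd := dvd_chooseGcd_mul_of_dvd_choose_two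
      ((dvd_mul_left E 2).trans (dvd_of_eq hE.symm)) ⟨t, ht⟩
    have hcop : IsCoprime E (chooseGcd m) :=
      (Int.prime_two.coprime_iff_not_dvd.2 hEodd).symm.of_isCoprime_of_dvd_right
        (chooseGcd_dvd_two_of_even he (by omega))
    rw [hE]
    exact mul_dvd_mul_left 2 (hcop.dvd_of_dvd_mul_right hEdvd)

theorem chooseDiffGcd_eq_mul (hm : 5 ≤ m) (h : ¬ ∃ k, 3 ≤ k ∧ m = 2 ^ k - 2) :
    chooseDiffGcd m = chooseGcd (m + 1) * chooseGcd m := by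
  have hdvd : chooseDiffGcd m ∣ (m + 1).choose 2 := by
    by_contra hnd
    rcases Nat.even_or_odd m with he | ho
    · obtain ⟨j, hj⟩ := (exists_two_pow_and_dvd_of_not_dvd_choose_two he hm hnd).1
      refine h ⟨j, ?_, by omega⟩
      by_contra! hj3
      interval_cases j <;> omega
    · exact hnd (dvd_choose_two_of_odd hm ho dvd_rfl)
  exact Int.dvd_antisymm (chooseDiffGcd_nonneg m) (by positivity)
    (dvd_chooseGcd_mul_of_dvd_choose_two dvd_rfl hdvd)
    ((isCoprime_chooseGcd_succ (by omega)).mul_dvd (chooseGcd_succ_dvd_chooseDiffGcd m)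
      (chooseGcd_dvd_chooseDiffGcd m))

theorem chooseDiffGcd_eq_two_mul {k : ℕ} (hm : 5 ≤ m) (hk : m + 2 = 2 ^ k) :
    chooseDiffGcd m = 2 * chooseGcd (m + 1) := by
  have hodd := (forall_odd_choose_iff (m + 1)).2 ⟨k, hk⟩
  have h2 := two_dvd_chooseDiffGcd hodd
  have he : Even m := by
    have : 2 ∣ 2 ^ k := dvd_pow_self 2 (by rintro rfl; omega)
    rw [Nat.even_iff]
    omega
  have hnd : ¬ chooseDiffGcd m ∣ (m + 1).choose 2 := fun h =>
    Nat.not_even_iff_odd.2 (hodd 2 (by omega))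
      ((Int.even_coe_nat _).1 (even_iff_two_dvd.2 (h2.trans h)))
  have hcop : IsCoprime (2 : ℤ) (chooseGcd (m + 1)) := by
    refine Int.prime_two.coprime_iff_not_dvd.2 fun h2' => ?_
    have : 2 ∣ m + 1 := (by exact_mod_cast h2' : 2 ∣ chooseGcd (m + 1)).trans
      (chooseGcd_dvd_self (by omega))
    rw [Nat.even_iff] at he
    omega
  exact Int.dvd_antisymm (chooseDiffGcd_nonneg m) (by positivity)
    (exists_two_pow_and_dvd_of_not_dvd_choose_two he hm hnd).2
    (hcop.mul_dvd h2 (chooseGcd_succ_dvd_chooseDiffGcd m))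

end chooseDiffGcd

/-- For `m ≥ 5`, with `d(k) = gcd{C(k+1,i) : 1 ≤ i ≤ k-1}` and
`D(m) = gcd{C(m+1,i) − C(m+1,i−1) : 3 ≤ i ≤ m−1}`, one has
`D(m)/d(m) = d(m−1)` if `m` is not of the form `2^k − 2`, and
`D(m)/d(m) = 2` if `m = 2^k − 2` for some `k ≥ 3`; in particular
`d(m)` divides `D(m)`. -/
theorem stmt_4 (m : ℕ) (hm : 5 ≤ m)
    (d : ℕ → ℕ) (hd : ∀ k, d k = (Finset.Icc 1 (k - 1)).gcd (fun i => (k + 1).choose i))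
    (D : ℤ)
    (hD : D = (Finset.Icc 3 (m - 1)).gcd
      (fun i => ((m + 1).choose i : ℤ) - ((m + 1).choose (i - 1) : ℤ))) :
    (d m : ℤ) ∣ D ∧
    ((¬ ∃ k : ℕ, 3 ≤ k ∧ m = 2 ^ k - 2) → D = (d m : ℤ) * (d (m - 1) : ℤ)) ∧
    ((∃ k : ℕ, 3 ≤ k ∧ m = 2 ^ k - 2) → D = 2 * (d m : ℤ)) := by
  have hdm : d m = chooseGcd (m + 1) := by rw [hd, gcd_Icc_choose_succ (by omega)]
  have hdm' : d (m - 1) = chooseGcd m := by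
    rw [hd, gcd_Icc_choose_succ (by omega), Nat.sub_add_cancel (by omega)]
  rw [hdm, hdm', show D = chooseDiffGcd m from hD]
  refine ⟨chooseGcd_succ_dvd_chooseDiffGcd m, chooseDiffGcd_eq_mul hm, ?_⟩
  rintro ⟨k, -, hk⟩
  exact chooseDiffGcd_eq_two_mul (k := k) hm (by omega)
end

section
/- Let p be an odd prime and l ≥ 2, s ≥ 1 integers with 2^l = p^s − 1. Then either 2^l = 8 (i.e., p = 3, s = 2), or s = 1 and l is a power of 2 (so that 2^l + 1 is a Fermat prime). -/
/-! If `s` is even, `p ^ (s / 2) - 1` and `p ^ (s / 2) + 1` are powers of two differing by `2`,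
which forces `p ^ (s / 2) = 3`. If `s` is odd, `p ^ s - 1 = (p - 1) (1 + p + ⋯ + p ^ (s - 1))`
and the second factor is odd, so it is `1` and `s = 1`; then `2 ^ l + 1 = p` is a prime, and
`l` must be a power of two. -/

open Finset

theorem Nat.eq_three_of_sq_sub_one_eq_two_pow {q l : ℕ} (h : q ^ 2 - 1 = 2 ^ l) : q = 3 := by
  have hq : 2 ≤ q := by
    have := Nat.two_pow_pos l
    by_contra! hq
    interval_cases q <;> simp at h <;> omega
  have hfac : (q + 1) * (q - 1) = 2 ^ l := by rw [← Nat.sq_sub_sq, one_pow, h]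
  obtain ⟨a, -, ha⟩ := (Nat.dvd_prime_pow Nat.prime_two).1 (Dvd.intro_left _ hfac)
  obtain ⟨b, -, hb⟩ := (Nat.dvd_prime_pow Nat.prime_two).1 (Dvd.intro _ hfac)
  -- the smaller of the two powers of two divides their difference
  have hab : 2 ^ a ∣ 2 ^ a + 2 := by
    have hlt : 2 ^ a < 2 ^ b := by omega
    rw [show 2 ^ a + 2 = 2 ^ b by omega]
    exact Nat.pow_dvd_pow 2 ((Nat.pow_lt_pow_iff_right one_lt_two).1 hlt).le
  have ha1 : a ≤ 1 :=
    (Nat.pow_dvd_pow_iff_le_right one_lt_two).1 (by simpa using (Nat.dvd_add_right dvd_rfl).1 hab)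
  interval_cases a
  · cases b <;> simp [pow_succ] at hb <;> omega
  · omega

theorem Nat.odd_geom_sum {p s : ℕ} (hp : Odd p) (hs : Odd s) : Odd (∑ i ∈ range s, p ^ i) := by
  rwa [odd_sum_iff_odd_card_odd, filter_true_of_mem fun i _ ↦ hp.pow, card_range]

theorem Nat.eq_one_of_pow_sub_one_eq_two_pow {p s l : ℕ} (hp : Odd p) (hs : Odd s)
    (h : p ^ s - 1 = 2 ^ l) : s = 1 := by
  have hfac := geom_sum_mul_of_one_le (x := p) hp.pos s
  have hsum : ∑ i ∈ range s, p ^ i = 1 :=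
    (Nat.Coprime.pow_right l (Nat.coprime_two_right.2 (Nat.odd_geom_sum hp hs))).eq_one_of_dvd
      (h ▸ Dvd.intro _ hfac)
  rw [hsum, one_mul] at hfac
  have hp2 : 2 ≤ p := by
    have := Nat.two_pow_pos l
    omega
  exact Nat.pow_right_injective hp2 (by simp only [pow_one]; omega)

theorem stmt_5_general (p l s : ℕ) (hp : p.Prime) (hodd : Odd p) (hl : 2 ≤ l)
    (h : 2 ^ l = p ^ s - 1) :
    (2 ^ l = 8 ∧ p = 3 ∧ s = 2) ∨ (s = 1 ∧ ∃ n : ℕ, l = 2 ^ n) := by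
  rcases Nat.even_or_odd s with ⟨t, rfl⟩ | hs
  · rw [← two_mul, pow_mul'] at h
    obtain ⟨rfl, rfl⟩ := Nat.prime_three.pow_eq_iff.1 (Nat.eq_three_of_sq_sub_one_eq_two_pow h.symm)
    norm_num [h]
  · obtain rfl := Nat.eq_one_of_pow_sub_one_eq_two_pow hodd hs h.symm
    refine .inr ⟨rfl, Nat.pow_of_pow_add_prime one_lt_two (by omega) ?_⟩
    rwa [h, pow_one, Nat.sub_add_cancel hp.one_le]

/-- If `p` is an odd prime, `l ≥ 2`, `s ≥ 1` and `2^l = p^s − 1`, then either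
`2^l = 8` (i.e. `p = 3`, `s = 2`), or `s = 1` and `l` is a power of `2`. -/
theorem stmt_5 (p l s : ℕ) (hp : p.Prime) (hodd : Odd p) (hl : 2 ≤ l) (hs : 1 ≤ s)
    (h : 2 ^ l = p ^ s - 1) :
    (2 ^ l = 8 ∧ p = 3 ∧ s = 2) ∨ (s = 1 ∧ ∃ n : ℕ, l = 2 ^ n) :=
  stmt_5_general p l s hp hodd hl h
end
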